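/- arXiv:0907.0472 — 2 statements merged into one kernel-verified Lean document; each statement's English description precedes it below -/
import Mathlib

section
/- For Hermitian positive semidefinite matrices K ⪯ K̄ and Hermitian positive definite matrices N, Ñ of the same size, log det(K+N) − log det(K+N+Ñ) ≤ log det(K̄+N) − log det(K̄+N+Ñ). -/
/-!
With `A = K + N` and `B = K̄ + N`, the claim is `det A · det (B + Ñ) ≤ det B · det (A + Ñ)`.
Factoring `X + Ñ = X (X⁻¹ + Ñ⁻¹) Ñ` gives `det (X + Ñ) / det X = det Ñ · det (X⁻¹ + Ñ⁻¹)`, so it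
suffices that `B⁻¹ + Ñ⁻¹ ⪯ A⁻¹ + Ñ⁻¹` (operator antitonicity of the inverse) and that `det` is
monotone on positive definite matrices. The latter follows by conjugating `A ⪯ B` with `A^{-1/2}`:
`1 ⪯ A^{-1/2} B A^{-1/2}`, whose eigenvalues are therefore all at least `1`.
-/

open Matrix ComplexOrder

namespace Matrix

open scoped MatrixOrder

variable {ι : Type*}

theorem PosDef.of_le {𝕜 : Type*} [RCLike 𝕜] {A B : Matrix ι ι 𝕜} (hA : A.PosDef) (h : A ≤ B) :
    B.PosDef := by
  simpa using hA.add_posSemidef (le_iff.mp h)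

variable [Fintype ι] [DecidableEq ι]

theorem det_add_eq_det_mul_det_inv_add_inv_mul_det {R : Type*} [CommRing R]
    {A B : Matrix ι ι R} (hA : IsUnit A.det) (hB : IsUnit B.det) :
    (A + B).det = A.det * (A⁻¹ + B⁻¹).det * B.det := by
  rw [← det_mul, ← det_mul, Matrix.mul_add, mul_nonsing_inv _ hA, Matrix.add_mul, Matrix.one_mul,
    Matrix.mul_assoc, nonsing_inv_mul _ hB, Matrix.mul_one, add_comm]

section RCLike

variable {𝕜 : Type*} [RCLike 𝕜]

theorem one_le_det_of_one_le {H : Matrix ι ι 𝕜} (h : 1 ≤ H) : 1 ≤ H.det := by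
  have hH : H.IsHermitian := by
    simpa using (le_iff.mp h).isHermitian.add isHermitian_one
  have heig : ∀ i, 1 ≤ hH.eigenvalues i := fun i =>
    (algebraMap_le_iff_le_spectrum (r := (1 : ℝ)) hH.isSelfAdjoint).mp (by simpa using h) _
      (hH.eigenvalues_mem_spectrum_real i)
  rw [hH.det_eq_prod_eigenvalues]
  exact Finset.one_le_prod fun i _ => by exact_mod_cast heig i

theorem det_le_det_of_le {A B : Matrix ι ι 𝕜} (hA : A.PosDef) (h : A ≤ B) : A.det ≤ B.det := by
  set S := CFC.sqrt A
  have hSS : S * S = A := CFC.sqrt_mul_sqrt_self A hA.posSemidef.nonneg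
  have hS : IsUnit S.det := (isUnit_iff_isUnit_det S).mp
    (CFC.isUnit_sqrt_iff_isStrictlyPositive.mpr hA.isStrictlyPositive)
  have hSinv : star S⁻¹ = S⁻¹ := by
    rw [star_eq_conjTranspose, conjTranspose_nonsing_inv,
      (CFC.sqrt_nonneg A).posSemidef.isHermitian.eq]
  have hSAS : S⁻¹ * A * S⁻¹ = 1 := by
    rw [← hSS, Matrix.mul_assoc, Matrix.mul_assoc, mul_nonsing_inv _ hS, Matrix.mul_one,
      nonsing_inv_mul _ hS]
  have hone : 1 ≤ S⁻¹ * B * S⁻¹ := by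
    simpa only [hSinv, hSAS] using star_left_conjugate_le_conjugate h S⁻¹
  have hdet : B.det = A.det * (S⁻¹ * B * S⁻¹).det := by
    have hB : S * (S⁻¹ * B * S⁻¹) * S = B := by
      simp only [← Matrix.mul_assoc, mul_nonsing_inv _ hS, Matrix.one_mul]
      rw [Matrix.mul_assoc, nonsing_inv_mul _ hS, Matrix.mul_one]
    conv_lhs => rw [← hB]
    rw [← hSS]
    simp only [det_mul]
    ring
  rw [hdet]
  exact le_mul_of_one_le_right hA.det_pos.le (one_le_det_of_one_le hone)

end RCLike

open scoped Matrix.Norms.L2Operator in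
theorem PosDef.inv_le_inv {A B : Matrix ι ι ℂ} (hA : A.PosDef) (h : A ≤ B) : B⁻¹ ≤ A⁻¹ := by
  simpa only [← nonsing_inv_eq_ringInverse] using
    CStarAlgebra.ringInverse_le_ringInverse h hA.isStrictlyPositive

theorem det_mul_det_add_le_det_mul_det_add {A B C : Matrix ι ι ℂ} (hA : A.PosDef) (hAB : A ≤ B)
    (hC : C.PosDef) : A.det * (B + C).det ≤ B.det * (A + C).det := by
  have hB : B.PosDef := hA.of_le hAB
  have hinv : B⁻¹ + C⁻¹ ≤ A⁻¹ + C⁻¹ := add_le_add_left (hA.inv_le_inv hAB) _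
  rw [det_add_eq_det_mul_det_inv_add_inv_mul_det hA.det_pos.ne'.isUnit hC.det_pos.ne'.isUnit,
    det_add_eq_det_mul_det_inv_add_inv_mul_det hB.det_pos.ne'.isUnit hC.det_pos.ne'.isUnit]
  calc A.det * (B.det * (B⁻¹ + C⁻¹).det * C.det)
      = (A.det * B.det * C.det) * (B⁻¹ + C⁻¹).det := by ring
    _ ≤ (A.det * B.det * C.det) * (A⁻¹ + C⁻¹).det := by
      gcongr
      · exact (mul_pos (mul_pos hA.det_pos hB.det_pos) hC.det_pos).le
      · exact det_le_det_of_le (hB.inv.add hC.inv) hinv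
    _ = B.det * (A.det * (A⁻¹ + C⁻¹).det * C.det) := by ring

end Matrix

theorem Complex.log_re_sub_log_re_le_of_mul_le {a b c d : ℂ} (ha : 0 < a) (hb : 0 < b)
    (hc : 0 < c) (hd : 0 < d) (h : a * d ≤ b * c) :
    Real.log a.re - Real.log c.re ≤ Real.log b.re - Real.log d.re := by
  obtain ⟨a, ha₀, rfl⟩ := RCLike.pos_iff_exists_ofReal.mp ha
  obtain ⟨b, hb₀, rfl⟩ := RCLike.pos_iff_exists_ofReal.mp hb
  obtain ⟨c, hc₀, rfl⟩ := RCLike.pos_iff_exists_ofReal.mp hc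
  obtain ⟨d, hd₀, rfl⟩ := RCLike.pos_iff_exists_ofReal.mp hd
  simp only [Complex.coe_algebraMap, Complex.ofReal_re]
  rw [sub_le_sub_iff, ← Real.log_mul ha₀.ne' hd₀.ne', ← Real.log_mul hb₀.ne' hc₀.ne']
  exact Real.log_le_log (mul_pos ha₀ hd₀) (by exact_mod_cast h)

theorem logDet_sub_logDet_mono_general {n : ℕ} (K Kb N Nt : Matrix (Fin n) (Fin n) ℂ)
    (hK : K.PosSemidef) (hle : (Kb - K).PosSemidef)
    (hN : N.PosDef) (hNt : Nt.PosDef) :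
    Real.log (K + N).det.re - Real.log (K + N + Nt).det.re ≤
      Real.log (Kb + N).det.re - Real.log (Kb + N + Nt).det.re := by
  open scoped MatrixOrder in
  have hAB : K + N ≤ Kb + N := le_iff.mpr (by rwa [add_sub_add_right_eq_sub])
  have hA : (K + N).PosDef := hN.posSemidef_add hK
  have hB : (Kb + N).PosDef := hA.of_le hAB
  exact Complex.log_re_sub_log_re_le_of_mul_le hA.det_pos hB.det_pos (hA.add hNt).det_pos
    (hB.add hNt).det_pos (det_mul_det_add_le_det_mul_det_add hA hAB hNt)

/-- For Hermitian positive semidefinite matrices `K ⪯ K̄` and Hermitian positive definite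
matrices `N, Ñ` of the same size,
`log det (K+N) − log det (K+N+Ñ) ≤ log det (K̄+N) − log det (K̄+N+Ñ)`. -/
theorem logDet_sub_logDet_mono {n : ℕ} (K Kb N Nt : Matrix (Fin n) (Fin n) ℂ)
    (hK : K.PosSemidef) (hKb : Kb.PosSemidef) (hle : (Kb - K).PosSemidef)
    (hN : N.PosDef) (hNt : Nt.PosDef) :
    Real.log (K + N).det.re - Real.log (K + N + Nt).det.re ≤
      Real.log (Kb + N).det.re - Real.log (Kb + N + Nt).det.re :=
  logDet_sub_logDet_mono_general K Kb N Nt hK hle hN hNt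
end

section
/- Suppose W is a nonsingular n×n complex matrix, M is Hermitian positive definite, and the equation X + W† X⁻¹ W = M with X = Σ − A†A is obtained from Σ = I − B Σ̃⁻¹ B† after the substitutions M = I − A†A − BB†, W = A†B†, Σ̃ = I − A Σ⁻¹ A†. Then this equation has a Hermitian positive definite solution X if and only if radius(M^{-1/2} W M^{-1/2}) ≤ 1/2. -/
open Matrix ComplexOrder
open scoped MatrixOrder

/-- The numerical radius of a square complex matrix:
`radius(X) = sup_{‖α‖ ≤ 1} |αᴴ X α|`. -/
noncomputable def numRadius {n : ℕ} (X : Matrix (Fin n) (Fin n) ℂ) : ℝ :=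
  sSup {r : ℝ | ∃ α : Fin n → ℂ,
    (∑ i, Complex.normSq (α i)) ≤ 1 ∧ r = ‖star α ⬝ᵥ X.mulVec α‖}

/-!
Conjugating by `M^{-1/2}` reduces the equation to `X + Aᴴ X⁻¹ A = 1` with
`A = M^{-1/2} W M^{-1/2}`. If `X` solves it, completing the square gives
`2 |⟨u, A u⟩| ≤ ⟨u, X u⟩ + ⟨A u, X⁻¹ A u⟩ = ‖u‖²`. Conversely, the iteration `X₀ = 1`,
`X_{m+1} = 1 - Aᴴ X_m⁻¹ A` is antitone in the Loewner order. Unrolling it bounds `⟨u, X_m u⟩`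
below by block Toeplitz forms `∑ ‖w_j‖² - 2 Re ∑ ⟨w_{j+1}, A w_j⟩`, which are nonnegative when
`radius(A) ≤ 1/2` (average the bound on `|⟨v, A v⟩|` over a discrete Fourier transform of `w`).
Hence `X_m ≥ A Aᴴ > 0`, and the limit of the iteration is a positive definite solution.
-/

open Filter Topology Finset

section QuadraticForm

variable {ι : Type*}

lemma Matrix.PosDef.of_le_s15 {P Q : Matrix ι ι ℂ} (hP : P.PosDef) (h : P ≤ Q) : Q.PosDef := by
  simpa using hP.add_posSemidef (le_iff.1 h)

variable [Fintype ι]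

lemma re_star_dotProduct_self (u : ι → ℂ) : (star u ⬝ᵥ u).re = ∑ i, Complex.normSq (u i) := by
  simp [dotProduct, Complex.normSq_apply, Complex.re_sum]

lemma star_dotProduct_conjTranspose_mul_mul_mulVec (B P : Matrix ι ι ℂ) (u : ι → ℂ) :
    star u ⬝ᵥ ((Bᴴ * P * B) *ᵥ u) = star (B *ᵥ u) ⬝ᵥ (P *ᵥ (B *ᵥ u)) := by
  rw [← mulVec_mulVec, ← mulVec_mulVec, dotProduct_mulVec, ← star_mulVec]

lemma Matrix.IsHermitian.star_mulVec_dotProduct {P : Matrix ι ι ℂ} (hP : P.IsHermitian)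
    (x y : ι → ℂ) : star (P *ᵥ x) ⬝ᵥ y = star x ⬝ᵥ (P *ᵥ y) := by
  rw [star_mulVec, ← dotProduct_mulVec, hP.eq]

lemma Matrix.le_of_forall_re_dotProduct_mulVec_le {P Q : Matrix ι ι ℂ} (hP : P.IsHermitian)
    (hQ : Q.IsHermitian) (h : ∀ x, (star x ⬝ᵥ (P *ᵥ x)).re ≤ (star x ⬝ᵥ (Q *ᵥ x)).re) :
    P ≤ Q := by
  refine le_iff.2 (PosSemidef.of_dotProduct_mulVec_nonneg (hQ.sub hP) fun x => ?_)
  have him := (hQ.sub hP).im_star_dotProduct_mulVec_self x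
  rw [sub_mulVec, dotProduct_sub] at him ⊢
  exact Complex.le_def.2 ⟨by simpa using h x, by simpa using him.symm⟩

variable [DecidableEq ι]

lemma Matrix.PosDef.re_dotProduct_sub_inv_mulVec {P : Matrix ι ι ℂ} (hP : P.PosDef)
    (x y : ι → ℂ) :
    (star (x - P⁻¹ *ᵥ y) ⬝ᵥ (P *ᵥ (x - P⁻¹ *ᵥ y))).re =
      (star x ⬝ᵥ (P *ᵥ x)).re - 2 * (star x ⬝ᵥ y).re + (star y ⬝ᵥ (P⁻¹ *ᵥ y)).re := by
  have hdet : IsUnit P.det := (isUnit_iff_isUnit_det P).1 hP.isUnit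
  have hPP : ∀ z, P *ᵥ (P⁻¹ *ᵥ z) = z := fun z => by
    rw [mulVec_mulVec, mul_nonsing_inv P hdet, one_mulVec]
  have hPP' : ∀ z, P⁻¹ *ᵥ (P *ᵥ z) = z := fun z => by
    rw [mulVec_mulVec, nonsing_inv_mul P hdet, one_mulVec]
  have hyx : (star y ⬝ᵥ x).re = (star x ⬝ᵥ y).re := by
    rw [star_dotProduct y x]; simp
  rw [star_sub, mulVec_sub, sub_dotProduct, dotProduct_sub, dotProduct_sub, hPP,
    hP.isHermitian.inv.star_mulVec_dotProduct, hPP', hP.isHermitian.inv.star_mulVec_dotProduct]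
  simp only [Complex.sub_re]
  linarith

end QuadraticForm

section Toeplitz

variable {ι : Type*} [Fintype ι]

lemma IsPrimitiveRoot.sum_star_pow_mul_pow {ζ : ℂ} {L : ℕ} (hζ : IsPrimitiveRoot ζ L) {a b : ℕ}
    (ha : a < L) (hb : b < L) :
    ∑ k ∈ range L, star (ζ ^ (a * k)) * ζ ^ (b * k) = if a = b then (L : ℂ) else 0 := by
  have hunit : star (ζ ^ a) * ζ ^ a = 1 := by
    rw [Complex.star_def, Complex.conj_mul', norm_pow, hζ.norm'_eq_one (by omega)]; norm_num
  have hterm : ∀ k, star (ζ ^ (a * k)) * ζ ^ (b * k) = (star (ζ ^ a) * ζ ^ b) ^ k := fun k => by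
    rw [mul_pow, ← star_pow, ← pow_mul, ← pow_mul]
  simp only [hterm]
  split_ifs with hab
  · rw [← hab, hunit]; simp
  · have hz : star (ζ ^ a) * ζ ^ b ≠ 1 := fun hz =>
      hab <| hζ.pow_inj ha hb <| by linear_combination (-ζ ^ a) * hz + ζ ^ b * hunit
    rw [geom_sum_eq hz, mul_pow, ← star_pow, ← pow_mul, ← pow_mul, mul_comm a, mul_comm b,
      pow_mul, pow_mul, hζ.pow_eq_one, one_pow, one_pow, star_one, mul_one, sub_self, zero_div]

/-- Parseval for the discrete Fourier transform `k ↦ ∑_{j ≤ N} ζ^{jk} w_j`, twisted by a shift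
`s`; `N + s < L` rules out wrap-around. -/
lemma sum_pow_mul_dotProduct_dft {ζ : ℂ} {L : ℕ} (hζ : IsPrimitiveRoot ζ L) (B : Matrix ι ι ℂ)
    (w : ℕ → ι → ℂ) {N s : ℕ} (hNs : N + s < L) :
    ∑ k ∈ range L, ζ ^ (s * k) * (star (∑ j ∈ range (N + 1), ζ ^ (j * k) • w j) ⬝ᵥ
        (B *ᵥ ∑ j ∈ range (N + 1), ζ ^ (j * k) • w j))
      = L * ∑ j ∈ range (N + 1 - s), star (w (j + s)) ⬝ᵥ (B *ᵥ w j) := by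
  set F := fun a b => star (w a) ⬝ᵥ (B *ᵥ w b)
  have expand : ∀ k, ζ ^ (s * k) * (star (∑ j ∈ range (N + 1), ζ ^ (j * k) • w j) ⬝ᵥ
        (B *ᵥ ∑ j ∈ range (N + 1), ζ ^ (j * k) • w j)) =
      ∑ a ∈ range (N + 1), ∑ b ∈ range (N + 1), star (ζ ^ (a * k)) * ζ ^ ((b + s) * k) * F a b := by
    intro k
    simp only [star_sum, star_smul, mulVec_sum, mulVec_smul, sum_dotProduct, dotProduct_sum,
      smul_dotProduct, dotProduct_smul, smul_eq_mul, mul_sum]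
    rw [sum_comm]
    refine sum_congr rfl fun a _ => sum_congr rfl fun b _ => ?_
    rw [add_mul, pow_add]
    ring
  calc _ = ∑ a ∈ range (N + 1), ∑ b ∈ range (N + 1),
        (∑ k ∈ range L, star (ζ ^ (a * k)) * ζ ^ ((b + s) * k)) * F a b := by
        simp only [expand, sum_mul]
        rw [sum_comm]
        exact sum_congr rfl fun a _ => sum_comm
    _ = ∑ b ∈ range (N + 1), ∑ a ∈ range (N + 1), if a = b + s then L * F a b else 0 := by
        rw [sum_comm]
        refine sum_congr rfl fun b hb => sum_congr rfl fun a ha => ?_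
        rw [mem_range] at ha hb
        rw [hζ.sum_star_pow_mul_pow (by omega) (by omega), ite_mul, zero_mul]
    _ = _ := by
        simp only [sum_ite_eq', ← sum_filter, mul_sum]
        congr 1
        ext j
        simp only [mem_filter, mem_range]
        omega

/-- The block Toeplitz form of `tridiag(-Aᴴ, 1, -A)` at `(w₀, …, w_N)`, without its last
diagonal term `‖w_N‖²`. -/
noncomputable def toeplitzForm (A : Matrix ι ι ℂ) (w : ℕ → ι → ℂ) (N : ℕ) : ℝ :=
  ∑ j ∈ range N, ((star (w j) ⬝ᵥ w j).re - 2 * (star (w (j + 1)) ⬝ᵥ (A *ᵥ w j)).re)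

lemma toeplitzForm_congr (A : Matrix ι ι ℂ) {w w' : ℕ → ι → ℂ} {N : ℕ}
    (h : ∀ j ≤ N, w j = w' j) : toeplitzForm A w N = toeplitzForm A w' N :=
  sum_congr rfl fun j hj => by rw [mem_range] at hj; rw [h j (by omega), h (j + 1) (by omega)]

/-- Average the bound `2 Re (ζ^k ⟨v_k, A v_k⟩) ≤ ‖v_k‖²` over the discrete Fourier transform
`v` of `w`. -/
lemma toeplitzForm_add_nonneg [DecidableEq ι] {A : Matrix ι ι ℂ}
    (hrad : ∀ u, ‖star u ⬝ᵥ (A *ᵥ u)‖ ≤ 1 / 2 * (star u ⬝ᵥ u).re) (w : ℕ → ι → ℂ) (N : ℕ) :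
    0 ≤ toeplitzForm A w N + (star (w N) ⬝ᵥ w N).re := by
  have hζ := Complex.isPrimitiveRoot_exp (N + 2) (by omega)
  set ζ := Complex.exp (2 * Real.pi * Complex.I / ↑(N + 2))
  set v := fun k => ∑ j ∈ range (N + 1), ζ ^ (j * k) • w j
  have hpoint : ∀ k ∈ range (N + 2), 2 * (ζ ^ (1 * k) * (star (v k) ⬝ᵥ (A *ᵥ v k))).re ≤
      (ζ ^ (0 * k) * (star (v k) ⬝ᵥ ((1 : Matrix ι ι ℂ) *ᵥ v k))).re := by
    intro k _
    simp only [one_mul, zero_mul, pow_zero, one_mulVec]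
    have hnorm : ‖ζ ^ k * (star (v k) ⬝ᵥ (A *ᵥ v k))‖ = ‖star (v k) ⬝ᵥ (A *ᵥ v k)‖ := by
      rw [norm_mul, norm_pow, hζ.norm'_eq_one (by omega), one_pow, one_mul]
    linarith [Complex.re_le_norm (ζ ^ k * (star (v k) ⬝ᵥ (A *ᵥ v k))), hrad (v k)]
  have hsum := sum_le_sum hpoint
  rw [← mul_sum, ← Complex.re_sum, ← Complex.re_sum, sum_pow_mul_dotProduct_dft hζ A w (by omega),
    sum_pow_mul_dotProduct_dft hζ 1 w (by omega)] at hsum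
  simp only [Complex.mul_re, Complex.natCast_re, Complex.natCast_im, zero_mul, sub_zero,
    Complex.re_sum, one_mulVec, add_tsub_cancel_right, tsub_zero, add_zero] at hsum
  have hL : (0 : ℝ) < (N + 2 : ℕ) := by positivity
  rw [toeplitzForm, sum_sub_distrib, ← mul_sum]
  rw [sum_range_succ] at hsum
  nlinarith

end Toeplitz

section Iteration

variable {ι : Type*} [Fintype ι] [DecidableEq ι]

noncomputable def riccatiIter (A : Matrix ι ι ℂ) : ℕ → Matrix ι ι ℂ
  | 0 => 1
  | m + 1 => 1 - Aᴴ * (riccatiIter A m)⁻¹ * A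

lemma re_dotProduct_one_sub_mulVec {A P : Matrix ι ι ℂ} (hP : P.PosDef) (u : ι → ℂ) :
    (star u ⬝ᵥ ((1 - Aᴴ * P⁻¹ * A) *ᵥ u)).re =
      (star u ⬝ᵥ u).re - 2 * (star (P⁻¹ *ᵥ (A *ᵥ u)) ⬝ᵥ (A *ᵥ u)).re +
        (star (P⁻¹ *ᵥ (A *ᵥ u)) ⬝ᵥ (P *ᵥ (P⁻¹ *ᵥ (A *ᵥ u)))).re := by
  have hsq := hP.re_dotProduct_sub_inv_mulVec (P⁻¹ *ᵥ (A *ᵥ u)) (A *ᵥ u)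
  rw [sub_self, star_zero, zero_dotProduct, Complex.zero_re] at hsq
  rw [sub_mulVec, one_mulVec, dotProduct_sub, Complex.sub_re,
    star_dotProduct_conjTranspose_mul_mul_mulVec]
  linarith

lemma isHermitian_riccatiIter (A : Matrix ι ι ℂ) : ∀ m, (riccatiIter A m).IsHermitian
  | 0 => isHermitian_one
  | m + 1 => isHermitian_one.sub
      (isHermitian_conjTranspose_mul_mul A (isHermitian_riccatiIter A m).inv)

/-- `⟨u, X_{m+1} u⟩ = ‖u‖² - 2 Re ⟨v, A u⟩ + ⟨v, X_m v⟩` for `v = X_m⁻¹ A u`, so each step of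
the iteration appends `v` to the Toeplitz form. -/
lemma toeplitzForm_add_riccatiIter_nonneg {A : Matrix ι ι ℂ}
    (hrad : ∀ u, ‖star u ⬝ᵥ (A *ᵥ u)‖ ≤ 1 / 2 * (star u ⬝ᵥ u).re) :
    ∀ m, (∀ k < m, (riccatiIter A k).PosDef) → ∀ (w : ℕ → ι → ℂ) (N : ℕ),
      0 ≤ toeplitzForm A w N + (star (w N) ⬝ᵥ (riccatiIter A m *ᵥ w N)).re := by
  intro m
  induction m with
  | zero =>
    intro _ w N
    simpa [riccatiIter] using toeplitzForm_add_nonneg hrad w N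
  | succ m ih =>
    intro hpos w N
    set v := (riccatiIter A m)⁻¹ *ᵥ (A *ᵥ w N)
    have hstep := ih (fun k hk => hpos k (by omega)) (Function.update w (N + 1) v) (N + 1)
    rw [toeplitzForm, sum_range_succ, ← toeplitzForm,
      toeplitzForm_congr A (w' := w) fun j hj => Function.update_of_ne (by omega) _ _,
      Function.update_self, Function.update_of_ne (by omega)] at hstep
    rw [riccatiIter, re_dotProduct_one_sub_mulVec (hpos m (by omega))]
    linarith

variable {A : Matrix ι ι ℂ}

lemma mul_conjTranspose_le_riccatiIter (hA : IsUnit A)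
    (hrad : ∀ u, ‖star u ⬝ᵥ (A *ᵥ u)‖ ≤ 1 / 2 * (star u ⬝ᵥ u).re) (m : ℕ) :
    A * Aᴴ ≤ riccatiIter A m := by
  have hAA : (A * Aᴴ).PosDef := .mul_conjTranspose_self A (vecMul_injective_iff_isUnit.2 hA)
  induction m using Nat.strong_induction_on with
  | _ m ih =>
    refine le_of_forall_re_dotProduct_mulVec_le hAA.isHermitian (isHermitian_riccatiIter A m)
      fun u => ?_
    have h := toeplitzForm_add_riccatiIter_nonneg hrad m (fun k hk => hAA.of_le_s15 (ih k hk))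
      (fun j => if j = 0 then Aᴴ *ᵥ u else u) 1
    have hAu := star_dotProduct_conjTranspose_mul_mul_mulVec Aᴴ 1 u
    simp only [conjTranspose_conjTranspose, Matrix.mul_one, one_mulVec] at hAu
    simp only [toeplitzForm, sum_range_one, zero_add, if_pos, one_ne_zero, if_false, ← hAu,
      mulVec_mulVec] at h
    linarith

lemma posDef_riccatiIter (hA : IsUnit A)
    (hrad : ∀ u, ‖star u ⬝ᵥ (A *ᵥ u)‖ ≤ 1 / 2 * (star u ⬝ᵥ u).re) (m : ℕ) :
    (riccatiIter A m).PosDef :=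
  (PosDef.mul_conjTranspose_self A (vecMul_injective_iff_isUnit.2 hA)).of_le_s15
    (mul_conjTranspose_le_riccatiIter hA hrad m)

open scoped Matrix.Norms.L2Operator in
lemma Matrix.PosDef.inv_anti {P Q : Matrix ι ι ℂ} (hP : P.PosDef) (h : P ≤ Q) : Q⁻¹ ≤ P⁻¹ := by
  rw [nonsing_inv_eq_ringInverse, nonsing_inv_eq_ringInverse]
  exact CStarAlgebra.ringInverse_le_ringInverse h (isStrictlyPositive_iff_posDef.2 hP)

lemma antitone_riccatiIter (hA : IsUnit A)
    (hrad : ∀ u, ‖star u ⬝ᵥ (A *ᵥ u)‖ ≤ 1 / 2 * (star u ⬝ᵥ u).re) :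
    Antitone (riccatiIter A) := by
  refine antitone_nat_of_succ_le fun m => ?_
  induction m with
  | zero =>
    simpa [riccatiIter, le_iff] using posSemidef_conjTranspose_mul_self A
  | succ m ih =>
    refine sub_le_sub_left ?_ 1
    simpa [star_eq_conjTranspose] using star_left_conjugate_le_conjugate
      ((posDef_riccatiIter hA hrad (m + 1)).inv_anti ih) A

end Iteration

/-- Since `0 ≤ a ≤ b` implies `‖a‖ ≤ ‖b‖`, the sequence is bounded and `‖x_m - L‖` is antitone
for any lower bound `L`; so a cluster point, which exists by properness, is the limit. -/
lemma CStarAlgebra.exists_tendsto_of_antitone {A : Type*} [CStarAlgebra A] [PartialOrder A]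
    [StarOrderedRing A] [ProperSpace A] {x : ℕ → A} (hx : Antitone x) {b : A}
    (hb : ∀ m, b ≤ x m) : ∃ L, b ≤ L ∧ Tendsto x atTop (𝓝 L) := by
  have hball : ∀ m, x m ∈ Metric.closedBall b ‖x 0 - b‖ := fun m => by
    rw [Metric.mem_closedBall, dist_eq_norm]
    exact norm_le_norm_of_nonneg_of_le (sub_nonneg.2 (hb m))
      (sub_le_sub_right (hx (Nat.zero_le m)) b)
  obtain ⟨L, -, φ, hφ, hlim⟩ := tendsto_subseq_of_bounded Metric.isBounded_closedBall hball
  have hLx : ∀ m, L ≤ x m := fun m => le_of_tendsto hlim <|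
    eventually_atTop.2 ⟨m, fun k hk => hx (hk.trans (hφ.id_le k))⟩
  refine ⟨L, ge_of_tendsto' hlim fun k => hb _, Metric.tendsto_atTop.2 fun ε hε => ?_⟩
  obtain ⟨K, hK⟩ := Metric.tendsto_atTop.1 hlim ε hε
  refine ⟨φ K, fun m hm => ?_⟩
  have hKK := hK K le_rfl
  rw [Function.comp_apply, dist_eq_norm] at hKK
  rw [dist_eq_norm]
  exact (norm_le_norm_of_nonneg_of_le (sub_nonneg.2 (hLx m)) (sub_le_sub_right (hx hm) L)).trans_lt
    hKK

section Riccati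

variable {ι : Type*} [Fintype ι] [DecidableEq ι] {A : Matrix ι ι ℂ}

open scoped Matrix.Norms.L2Operator in
lemma exists_posDef_riccati_one (hA : IsUnit A)
    (hrad : ∀ u, ‖star u ⬝ᵥ (A *ᵥ u)‖ ≤ 1 / 2 * (star u ⬝ᵥ u).re) :
    ∃ X : Matrix ι ι ℂ, X.PosDef ∧ X + Aᴴ * X⁻¹ * A = 1 := by
  obtain ⟨X, hAX, hlim⟩ := CStarAlgebra.exists_tendsto_of_antitone (antitone_riccatiIter hA hrad)
    (mul_conjTranspose_le_riccatiIter hA hrad)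
  have hX : X.PosDef :=
    (PosDef.mul_conjTranspose_self A (vecMul_injective_iff_isUnit.2 hA)).of_le_s15 hAX
  have hinv : Tendsto (fun m => (riccatiIter A m)⁻¹) atTop (𝓝 X⁻¹) := by
    simp only [nonsing_inv_eq_ringInverse]
    exact (NormedRing.inverse_continuousAt hX.isUnit.unit).tendsto.comp hlim
  have hsucc : Tendsto (fun m => riccatiIter A (m + 1)) atTop (𝓝 (1 - Aᴴ * X⁻¹ * A)) :=
    tendsto_const_nhds.sub ((tendsto_const_nhds.mul hinv).mul tendsto_const_nhds)
  have hfix : X = 1 - Aᴴ * X⁻¹ * A :=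
    tendsto_nhds_unique (hlim.comp (tendsto_add_atTop_nat 1)) hsucc
  exact ⟨X, hX, eq_sub_iff_add_eq.1 hfix⟩

lemma norm_dotProduct_mulVec_le_of_riccati_one {X : Matrix ι ι ℂ} (hX : X.PosDef)
    (h : X + Aᴴ * X⁻¹ * A = 1) (u : ι → ℂ) :
    ‖star u ⬝ᵥ (A *ᵥ u)‖ ≤ 1 / 2 * (star u ⬝ᵥ u).re := by
  obtain ⟨c, hc, hcz⟩ := Complex.exists_norm_eq_mul_self (star u ⬝ᵥ (A *ᵥ u))
  have hsq := hX.re_dotProduct_sub_inv_mulVec u (c • A *ᵥ u)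
  have hform : star (c • A *ᵥ u) ⬝ᵥ (X⁻¹ *ᵥ (c • A *ᵥ u)) = star u ⬝ᵥ ((Aᴴ * X⁻¹ * A) *ᵥ u) := by
    rw [star_dotProduct_conjTranspose_mul_mul_mulVec, mulVec_smul, star_smul, smul_dotProduct,
      dotProduct_smul, smul_eq_mul, smul_eq_mul, ← mul_assoc, Complex.star_def, Complex.conj_mul',
      hc]
    simp
  have hsum :
      (star u ⬝ᵥ (X *ᵥ u)).re + (star u ⬝ᵥ ((Aᴴ * X⁻¹ * A) *ᵥ u)).re = (star u ⬝ᵥ u).re := by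
    rw [← Complex.add_re, ← dotProduct_add, ← add_mulVec, h, one_mulVec]
  rw [hform, dotProduct_smul, smul_eq_mul, ← hcz, Complex.ofReal_re] at hsq
  have hnonneg : 0 ≤ (star (u - X⁻¹ *ᵥ (c • A *ᵥ u)) ⬝ᵥ (X *ᵥ (u - X⁻¹ *ᵥ (c • A *ᵥ u)))).re :=
    hX.posSemidef.re_dotProduct_nonneg _
  linarith

theorem exists_posDef_riccati_one_iff (hA : IsUnit A) :
    (∃ X : Matrix ι ι ℂ, X.PosDef ∧ X + Aᴴ * X⁻¹ * A = 1) ↔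
      ∀ u, ‖star u ⬝ᵥ (A *ᵥ u)‖ ≤ 1 / 2 * (star u ⬝ᵥ u).re :=
  ⟨fun ⟨_, hX, h⟩ => norm_dotProduct_mulVec_le_of_riccati_one hX h, exists_posDef_riccati_one hA⟩

end Riccati

section Congruence

variable {ι : Type*} [Fintype ι] [DecidableEq ι] {C : Matrix ι ι ℂ}

lemma conjTranspose_mul_riccati_mul (hC : IsUnit C) (W X : Matrix ι ι ℂ) :
    Cᴴ * X * C + (Cᴴ * W * C)ᴴ * (Cᴴ * X * C)⁻¹ * (Cᴴ * W * C) =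
      Cᴴ * (X + Wᴴ * X⁻¹ * W) * C := by
  have hdet : IsUnit C.det := (isUnit_iff_isUnit_det C).1 hC
  have hdetH : IsUnit Cᴴ.det := by rw [det_conjTranspose]; exact hdet.star
  simp only [Matrix.mul_inv_rev, conjTranspose_mul, conjTranspose_conjTranspose, Matrix.mul_add,
    Matrix.add_mul, Matrix.mul_assoc, mul_nonsing_inv_cancel_left _ _ hdet,
    nonsing_inv_mul_cancel_left _ _ hdetH]

lemma Matrix.PosDef.riccati_conj (hC : IsUnit C) {W M X : Matrix ι ι ℂ} (hX : X.PosDef)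
    (h : X + Wᴴ * X⁻¹ * W = M) :
    (Cᴴ * X * C).PosDef ∧ Cᴴ * X * C + (Cᴴ * W * C)ᴴ * (Cᴴ * X * C)⁻¹ * (Cᴴ * W * C) =
      Cᴴ * M * C :=
  ⟨hX.conjTranspose_mul_mul_same (mulVec_injective_iff_isUnit.2 hC),
    by rw [conjTranspose_mul_riccati_mul hC, h]⟩

lemma exists_posDef_riccati_iff_conj (hC : IsUnit C) (W M : Matrix ι ι ℂ) :
    (∃ X : Matrix ι ι ℂ, X.PosDef ∧ X + Wᴴ * X⁻¹ * W = M) ↔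
      ∃ Y : Matrix ι ι ℂ, Y.PosDef ∧ Y + (Cᴴ * W * C)ᴴ * Y⁻¹ * (Cᴴ * W * C) = Cᴴ * M * C := by
  have hdet : IsUnit C.det := (isUnit_iff_isUnit_det C).1 hC
  have hcancel : ∀ Z : Matrix ι ι ℂ, C⁻¹ᴴ * (Cᴴ * Z * C) * C⁻¹ = Z := fun Z => by
    rw [conjTranspose_nonsing_inv, Matrix.mul_assoc, Matrix.mul_assoc, mul_nonsing_inv _ hdet,
      Matrix.mul_one, nonsing_inv_mul_cancel_left _ _ (by rw [det_conjTranspose]; exact hdet.star)]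
  refine ⟨fun ⟨X, hX, h⟩ => ⟨_, hX.riccati_conj hC h⟩, fun ⟨Y, hY, h⟩ => ?_⟩
  have := hY.riccati_conj ((isUnit_iff_isUnit_det _).2 (isUnit_nonsing_inv_det C hdet)) h
  rw [hcancel, hcancel] at this
  exact ⟨_, this⟩

end Congruence

lemma numRadius_le_iff {n : ℕ} {X : Matrix (Fin n) (Fin n) ℂ} {c : ℝ} (hc : 0 ≤ c) :
    numRadius X ≤ c ↔ ∀ u, ‖star u ⬝ᵥ (X *ᵥ u)‖ ≤ c * (star u ⬝ᵥ u).re := by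
  have hbdd : BddAbove {r : ℝ | ∃ α : Fin n → ℂ,
      (∑ i, Complex.normSq (α i)) ≤ 1 ∧ r = ‖star α ⬝ᵥ X.mulVec α‖} := by
    refine ⟨∑ i, ∑ j, ‖X i j‖, ?_⟩
    rintro r ⟨α, hα, rfl⟩
    have hαi : ∀ i, ‖α i‖ ≤ 1 := fun i => by
      have := (single_le_sum (fun j _ => Complex.normSq_nonneg (α j)) (mem_univ i)).trans hα
      rw [Complex.normSq_eq_norm_sq] at this
      exact (sq_le_one_iff₀ (norm_nonneg _)).1 this
    calc ‖star α ⬝ᵥ X *ᵥ α‖ = ‖∑ i, ∑ j, star (α i) * (X i j * α j)‖ := by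
          simp [dotProduct, mulVec, mul_sum]
      _ ≤ ∑ i, ∑ j, ‖star (α i) * (X i j * α j)‖ :=
          (norm_sum_le _ _).trans (sum_le_sum fun i _ => norm_sum_le _ _)
      _ ≤ ∑ i, ∑ j, ‖X i j‖ := sum_le_sum fun i _ => sum_le_sum fun j _ => by
          rw [norm_mul, norm_mul, norm_star]
          exact (mul_le_of_le_one_left (by positivity) (hαi i)).trans
            (mul_le_of_le_one_right (norm_nonneg _) (hαi j))
  constructor
  · intro h u
    rcases eq_or_ne u 0 with rfl | hu
    · simp
    have hs : 0 < (star u ⬝ᵥ u).re := (Complex.lt_def.1 (dotProduct_star_self_pos_iff.2 hu)).1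
    set t : ℝ := (Real.sqrt (star u ⬝ᵥ u).re)⁻¹
    have ht : t ^ 2 * (star u ⬝ᵥ u).re = 1 := by
      rw [inv_pow, Real.sq_sqrt hs.le, inv_mul_cancel₀ hs.ne']
    have hscale : ∀ Y : Matrix (Fin n) (Fin n) ℂ,
        star ((t : ℂ) • u) ⬝ᵥ (Y *ᵥ ((t : ℂ) • u)) = (t ^ 2 : ℝ) * (star u ⬝ᵥ (Y *ᵥ u)) := by
      intro Y
      rw [mulVec_smul, star_smul, smul_dotProduct, dotProduct_smul, smul_eq_mul, smul_eq_mul,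
        Complex.star_def, Complex.conj_ofReal]
      push_cast
      ring
    have hunit : ∑ i, Complex.normSq (((t : ℂ) • u) i) ≤ 1 := by
      have h1 := hscale 1
      rw [one_mulVec, one_mulVec] at h1
      rw [← re_star_dotProduct_self, h1, Complex.re_ofReal_mul, ht]
    have hle := (le_csSup hbdd ⟨_, hunit, rfl⟩).trans h
    rw [hscale, norm_mul, Complex.norm_real, Real.norm_of_nonneg (by positivity)] at hle
    calc ‖star u ⬝ᵥ (X *ᵥ u)‖ = t ^ 2 * ‖star u ⬝ᵥ (X *ᵥ u)‖ * (star u ⬝ᵥ u).re := by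
          rw [mul_right_comm, ht, one_mul]
      _ ≤ c * (star u ⬝ᵥ u).re := mul_le_mul_of_nonneg_right hle hs.le
  · intro h
    refine Real.sSup_le ?_ hc
    rintro r ⟨α, hα, rfl⟩
    rw [← re_star_dotProduct_self] at hα
    exact (h α).trans (mul_le_of_le_one_right hc hα)

/-- Suppose `W` is a nonsingular `n×n` complex matrix and `M` is Hermitian positive definite.
Then the discrete algebraic Riccati-type equation `X + Wᴴ X⁻¹ W = M` has a Hermitian positive
definite solution `X` if and only if `radius(M^{-1/2} W M^{-1/2}) ≤ 1/2`. -/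
theorem riccati_posDef_solution_iff {n : ℕ} (W M : Matrix (Fin n) (Fin n) ℂ)
    (hW : IsUnit W.det) (hM : M.PosDef) :
    (∃ X : Matrix (Fin n) (Fin n) ℂ, X.PosDef ∧ X + Wᴴ * X⁻¹ * W = M) ↔
      numRadius ((CFC.sqrt M)⁻¹ * W * (CFC.sqrt M)⁻¹) ≤ 1 / 2 := by
  have hS : (CFC.sqrt M).PosDef :=
    isStrictlyPositive_iff_posDef.1 (isStrictlyPositive_iff_posDef.2 hM).sqrt
  have hSdet : IsUnit (CFC.sqrt M).det := (isUnit_iff_isUnit_det _).1 hS.isUnit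
  set C := (CFC.sqrt M)⁻¹
  have hC : IsUnit C := hS.inv.isUnit
  have hCH : Cᴴ = C := hS.inv.isHermitian.eq
  have hCMC : Cᴴ * M * C = 1 := by
    rw [hCH, ← CFC.sqrt_mul_sqrt_self M hM.posSemidef.nonneg, ← Matrix.mul_assoc,
      nonsing_inv_mul _ hSdet, Matrix.one_mul, mul_nonsing_inv _ hSdet]
  rw [exists_posDef_riccati_iff_conj hC, hCMC, hCH,
    exists_posDef_riccati_one_iff ((hC.mul ((isUnit_iff_isUnit_det W).2 hW)).mul hC),
    numRadius_le_iff (by norm_num)]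
end
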